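/- An integral domain D is a Prüfer v-multiplication domain if and only if D is essential and the essential prime spectrum ℰ(D) = {p ∈ Spec(D) : D_p is a valuation domain} is closed in Spec(D) with respect to the constructible topology. -/

import Mathlib

open scoped nonZeroDivisors

/-- The localization of `R` at the prime `p`, viewed inside a field `K` to which `R` maps. -/
def locg {R K : Type*} [CommRing R] [Field K] [Algebra R K] (p : PrimeSpectrum R) :
    Subring K where
  carrier := {x : K | ∃ a b : R, b ∉ p.asIdeal ∧ x * algebraMap R K b = algebraMap R K a}
  zero_mem' := ⟨0, 1, fun h => p.2.ne_top ((Ideal.eq_top_iff_one _).2 h), by simp⟩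
  one_mem' := ⟨1, 1, fun h => p.2.ne_top ((Ideal.eq_top_iff_one _).2 h), by simp⟩
  add_mem' := by
    rintro x y ⟨a₁, b₁, hb₁, e₁⟩ ⟨a₂, b₂, hb₂, e₂⟩
    exact ⟨a₁ * b₂ + a₂ * b₁, b₁ * b₂,
      fun h => ((p.2.mem_or_mem h).elim hb₁ hb₂), by
        rw [map_add, map_mul, map_mul, map_mul]
        linear_combination (algebraMap R K b₂) * e₁ + (algebraMap R K b₁) * e₂⟩
  mul_mem' := by
    rintro x y ⟨a₁, b₁, hb₁, e₁⟩ ⟨a₂, b₂, hb₂, e₂⟩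
    exact ⟨a₁ * a₂, b₁ * b₂,
      fun h => ((p.2.mem_or_mem h).elim hb₁ hb₂), by
        rw [map_mul, map_mul, show x * y * (algebraMap R K b₁ * algebraMap R K b₂)
          = (x * algebraMap R K b₁) * (y * algebraMap R K b₂) by ring, e₁, e₂]⟩
  neg_mem' := by
    rintro x ⟨a, b, hb, e⟩
    exact ⟨-a, b, hb, by rw [map_neg, neg_mul, e]⟩
/-- `I` is a `t`-ideal: its `t`-closure is contained in (hence equal to) `I`. -/
def IsTIdeal (R : Type*) [CommRing R] [IsDomain R] (I : Ideal R) : Prop :=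
  ∀ x : R, (∃ J : Ideal R, J.FG ∧ J ≤ I ∧
    algebraMap R (FractionRing R) x ∈
      (1 / (1 / (J : FractionalIdeal R⁰ (FractionRing R))))) → x ∈ I

/-- `M` is a `t`-maximal ideal: maximal among proper `t`-ideals. -/
def IsTMax (R : Type*) [CommRing R] [IsDomain R] (M : Ideal R) : Prop :=
  IsTIdeal R M ∧ M ≠ ⊤ ∧ ∀ I : Ideal R, IsTIdeal R I → I ≠ ⊤ → M ≤ I → I = M
/-- `R` is a Prüfer `v`-multiplication domain: the localization at every `t`-maximal
ideal is a valuation domain. -/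
def IsPvMD (R : Type*) [CommRing R] [IsDomain R] : Prop :=
  ∀ M : Ideal R, IsTMax R M → ∀ hM : M.IsPrime,
    ValuationRing (locg (K := FractionRing R) ⟨M, hM⟩)
/-- The essential prime spectrum: the primes at which the localization is a valuation
domain. -/
def EssSpec (R : Type*) [CommRing R] [IsDomain R] : Set (PrimeSpectrum R) :=
  {p : PrimeSpectrum R | ValuationRing (locg (K := FractionRing R) p)}

/-- `{D_p : p ∈ Y}` is an essential representation of `R`: each localization is a
valuation domain, and their intersection (inside the quotient field) is `R`. -/
def IsEssentialRep (R : Type*) [CommRing R] [IsDomain R] (Y : Set (PrimeSpectrum R)) : Prop :=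
  (∀ p ∈ Y, ValuationRing (locg (K := FractionRing R) p)) ∧
    (⨅ p ∈ Y, locg (K := FractionRing R) p) = (algebraMap R (FractionRing R)).range

/-- `R` is an essential domain. -/
def IsEssential (R : Type*) [CommRing R] [IsDomain R] : Prop :=
  ∃ Y : Set (PrimeSpectrum R), IsEssentialRep R Y
/-- The constructible (patch) topology on the prime spectrum: the coarsest topology in
which every basic open `D(f)` is clopen. -/
def constructibleTop (A : Type*) [CommRing A] : TopologicalSpace (PrimeSpectrum A) :=
  TopologicalSpace.generateFrom
    {s | (∃ f : A, s = {p : PrimeSpectrum A | f ∉ p.asIdeal}) ∨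
      (∃ f : A, s = {p : PrimeSpectrum A | f ∈ p.asIdeal})}

/-!
A localization `D_p` is a valuation domain exactly when any two elements of `D` become
comparable for divisibility after multiplying by some element outside `p`. This makes every
essential prime a `t`-ideal and makes `ℰ(D)` closed under generalization, so in a PvMD the
essential primes are exactly the prime `t`-ideals. Not being a `t`-ideal is witnessed by finitely
many elements (a finitely generated `J ⊆ p` and `x ∈ J_v \ p`), hence is a patch-open condition.
Every domain is the intersection of its localizations at `t`-maximal ideals, so a PvMD is
essential.

Conversely, the patch topology is compact: an ultrafilter of primes converges to the prime of
elements lying in almost all of them. If `D = ⋂_{p ∈ Y} D_p`, a finitely generated ideal inside a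
proper `t`-ideal lies in some essential prime, since otherwise its inverse is `D`. For a
`t`-maximal `M`, compactness of the patch-closed set `ℰ(D)` then gives an essential prime
`P ⊇ M`; being a `t`-ideal, `P` equals `M`.
-/

open Topology

section ConstructibleTop

variable {A : Type*} [CommRing A]

lemma isOpen_setOf_notMem_constructibleTop (f : A) :
    IsOpen[constructibleTop A] {p : PrimeSpectrum A | f ∉ p.asIdeal} :=
  .basic _ (.inl ⟨f, rfl⟩)

lemma isOpen_setOf_mem_constructibleTop (f : A) :
    IsOpen[constructibleTop A] {p : PrimeSpectrum A | f ∈ p.asIdeal} :=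
  .basic _ (.inr ⟨f, rfl⟩)

lemma isClosed_setOf_mem_constructibleTop (f : A) :
    IsClosed[constructibleTop A] {p : PrimeSpectrum A | f ∈ p.asIdeal} :=
  @IsClosed.mk _ (constructibleTop A) _ (isOpen_setOf_notMem_constructibleTop f)

lemma isOpen_setOf_subset_constructibleTop {s : Set A} (hs : s.Finite) :
    IsOpen[constructibleTop A] {p : PrimeSpectrum A | s ⊆ p.asIdeal} := by
  let := constructibleTop A
  have h : {p : PrimeSpectrum A | s ⊆ p.asIdeal} = ⋂ f ∈ s, {p | f ∈ p.asIdeal} := by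
    ext
    simp [Set.subset_def]
  exact h ▸ hs.isOpen_biInter fun f _ => isOpen_setOf_mem_constructibleTop f

def PrimeSpectrum.ultrafilterLimit (U : Ultrafilter (PrimeSpectrum A)) : PrimeSpectrum A where
  asIdeal :=
    { carrier := {x | {p : PrimeSpectrum A | x ∈ p.asIdeal} ∈ U}
      zero_mem' := Filter.univ_mem' fun p => p.asIdeal.zero_mem
      add_mem' := fun hx hy => Filter.mem_of_superset (Filter.inter_mem hx hy)
        fun p hp => p.asIdeal.add_mem hp.1 hp.2
      smul_mem' := fun r _ hx =>
        Filter.mem_of_superset hx fun p hp => p.asIdeal.mul_mem_left r hp }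
  isPrime := by
    refine ⟨fun h => ?_, fun {x y} hxy => ?_⟩
    · obtain ⟨p, hp⟩ := U.nonempty_of_mem ((Ideal.eq_top_iff_one _).1 h)
      exact p.2.ne_top ((Ideal.eq_top_iff_one _).2 hp)
    · exact Ultrafilter.union_mem_iff.1 <|
        Filter.mem_of_superset hxy fun p hp => p.2.mem_or_mem hp

lemma PrimeSpectrum.le_nhds_ultrafilterLimit (U : Ultrafilter (PrimeSpectrum A)) :
    (U : Filter (PrimeSpectrum A)) ≤
      @nhds _ (constructibleTop A) (PrimeSpectrum.ultrafilterLimit U) := by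
  rw [constructibleTop, TopologicalSpace.nhds_generateFrom]
  refine le_iInf₂ fun s ⟨hs, hsub⟩ => Filter.le_principal_iff.2 ?_
  rcases hsub with ⟨f, rfl⟩ | ⟨f, rfl⟩
  · exact Ultrafilter.compl_mem_iff_notMem.2 hs
  · exact hs

lemma compactSpace_constructibleTop : @CompactSpace (PrimeSpectrum A) (constructibleTop A) := by
  let := constructibleTop A
  exact ⟨isCompact_iff_ultrafilter_le_nhds.2 fun U _ =>
    ⟨_, Set.mem_univ _, PrimeSpectrum.le_nhds_ultrafilterLimit U⟩⟩

end ConstructibleTop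

lemma algebraMap_mem_locg {R K : Type*} [CommRing R] [Field K] [Algebra R K]
    (p : PrimeSpectrum R) (r : R) : algebraMap R K r ∈ locg (K := K) p :=
  ⟨r, 1, (Ideal.ne_top_iff_one _).1 p.2.ne_top, by simp⟩

section Domain

variable {R : Type*} [CommRing R] [IsDomain R]

local notation "𝕂" => FractionRing R
local notation "φ" => algebraMap R (FractionRing R)

lemma mem_one_div_coeIdeal_iff {J : Ideal R} (hJ : J ≠ ⊥) {y : 𝕂} :
    y ∈ 1 / (J : FractionalIdeal R⁰ 𝕂) ↔ ∀ j ∈ J, y * φ j ∈ (1 : FractionalIdeal R⁰ 𝕂) := by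
  rw [FractionalIdeal.mem_div_iff_of_ne_zero (FractionalIdeal.coeIdeal_ne_zero.2 hJ)]
  exact ⟨fun h j hj => h _ (FractionalIdeal.mem_coeIdeal_of_mem _ hj), fun h _ hz => by
    obtain ⟨j, hj, rfl⟩ := (FractionalIdeal.mem_coeIdeal _).1 hz
    exact h j hj⟩

lemma mem_one_div_one_div_coeIdeal_iff {J : Ideal R} (hJ : J ≠ ⊥) {x : 𝕂} :
    x ∈ 1 / (1 / (J : FractionalIdeal R⁰ 𝕂)) ↔
      ∀ y ∈ 1 / (J : FractionalIdeal R⁰ 𝕂), x * y ∈ (1 : FractionalIdeal R⁰ 𝕂) := by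
  have hone : (1 : 𝕂) ∈ 1 / (J : FractionalIdeal R⁰ 𝕂) :=
    (mem_one_div_coeIdeal_iff hJ).2 fun j _ => by simp
  refine FractionalIdeal.mem_div_iff_of_ne_zero fun h => ?_
  rw [h, FractionalIdeal.mem_zero_iff] at hone
  exact one_ne_zero hone

lemma isTIdeal_of_forall_ne_bot {I : Ideal R}
    (h : ∀ x : R, ∀ J : Ideal R, J.FG → J ≤ I → J ≠ ⊥ →
      φ x ∈ 1 / (1 / (J : FractionalIdeal R⁰ 𝕂)) → x ∈ I) :
    IsTIdeal R I := by
  rintro x ⟨J, hJ, hJI, hx⟩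
  rcases eq_or_ne J ⊥ with rfl | hJ0
  · simp only [FractionalIdeal.coeIdeal_bot, FractionalIdeal.div_zero,
      FractionalIdeal.mem_zero_iff, FaithfulSMul.algebraMap_eq_zero_iff] at hx
    exact hx ▸ I.zero_mem
  · exact h x J hJ hJI hJ0 hx

lemma isTIdeal_span_singleton (b : R) : IsTIdeal R (Ideal.span {b}) := by
  refine isTIdeal_of_forall_ne_bot fun x J _ hJb hJ0 hx => ?_
  have hb : φ b ≠ 0 := by
    rw [ne_eq, FaithfulSMul.algebraMap_eq_zero_iff]
    rintro rfl
    exact hJ0 (le_bot_iff.1 (by simpa using hJb))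
  have hbinv : (φ b)⁻¹ ∈ 1 / (J : FractionalIdeal R⁰ 𝕂) := by
    refine (mem_one_div_coeIdeal_iff hJ0).2 fun j hj => ?_
    obtain ⟨c, rfl⟩ := Ideal.mem_span_singleton'.1 (hJb hj)
    exact (FractionalIdeal.mem_one_iff _).2 ⟨c, by rw [map_mul]; field_simp⟩
  obtain ⟨c, hc⟩ :=
    (FractionalIdeal.mem_one_iff _).1 ((mem_one_div_one_div_coeIdeal_iff hJ0).1 hx _ hbinv)
  refine Ideal.mem_span_singleton'.2 ⟨c, FaithfulSMul.algebraMap_injective R 𝕂 ?_⟩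
  rw [map_mul, hc]
  field_simp

lemma IsTIdeal.colon {I : Ideal R} (hI : IsTIdeal R I) (y : R) : IsTIdeal R (I.colon {y}) := by
  refine isTIdeal_of_forall_ne_bot fun x J hJ hJI hJ0 hx => ?_
  rw [Submodule.mem_colon_singleton, smul_eq_mul]
  rcases eq_or_ne y 0 with rfl | hy
  · simp
  have hyJ : Ideal.span {y} * J ≠ ⊥ := by simp [hy, hJ0]
  refine hI _ ⟨Ideal.span {y} * J, (Submodule.fg_span_singleton y).mul hJ, ?_, ?_⟩
  · refine Ideal.mul_le.2 fun r hr j hj => ?_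
    obtain ⟨c, rfl⟩ := Ideal.mem_span_singleton'.1 hr
    convert I.mul_mem_left c (Submodule.mem_colon_singleton.1 (hJI hj)) using 1
    rw [smul_eq_mul]
    ring
  · refine (mem_one_div_one_div_coeIdeal_iff hyJ).2 fun w hw => ?_
    have hwy : w * φ y ∈ 1 / (J : FractionalIdeal R⁰ 𝕂) :=
      (mem_one_div_coeIdeal_iff hJ0).2 fun j hj => by
        simpa [mul_assoc] using (mem_one_div_coeIdeal_iff hyJ).1 hw (y * j)
          (Ideal.mul_mem_mul (Ideal.mem_span_singleton_self y) hj)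
    simpa [mul_comm, mul_left_comm] using (mem_one_div_one_div_coeIdeal_iff hJ0).1 hx _ hwy

lemma isTIdeal_sSup_of_directedOn {c : Set (Ideal R)} (hc : c.Nonempty)
    (hdir : DirectedOn (· ≤ ·) c) (ht : ∀ I ∈ c, IsTIdeal R I) : IsTIdeal R (sSup c) := by
  rintro x ⟨J, hJ, hJc, hx⟩
  obtain ⟨I, hIc, hJI⟩ := (CompleteLattice.isCompactElement_iff_le_of_directed_sSup_le _ J).1
    ((Submodule.fg_iff_compact J).1 hJ) c hc hdir hJc
  exact le_sSup hIc (ht I hIc x ⟨J, hJ, hJI, hx⟩)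

lemma exists_isTMax_le {I : Ideal R} (hI : IsTIdeal R I) (hI1 : I ≠ ⊤) :
    ∃ M, IsTMax R M ∧ I ≤ M := by
  -- `⊤` is finitely generated, so a directed union of proper ideals is proper
  obtain ⟨M, hIM, hM⟩ := zorn_le_nonempty₀ {J | IsTIdeal R J ∧ J ≠ ⊤}
    (fun c hcs hc J hJ => ⟨sSup c,
      ⟨isTIdeal_sSup_of_directedOn ⟨J, hJ⟩ hc.directedOn fun I hI => (hcs hI).1,
        (CompleteLattice.IsCompactElement.directed_sSup_lt_of_lt
          ((Submodule.fg_iff_compact ⊤).1 Module.Finite.fg_top) ⟨J, hJ⟩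
          hc.directedOn fun I hI => lt_top_iff_ne_top.2 (hcs hI).2).ne⟩,
      fun _ => le_sSup⟩) I ⟨hI, hI1⟩
  exact ⟨M, ⟨hM.1.1, hM.1.2, fun J hJ hJ1 hMJ => (hM.2 ⟨hJ, hJ1⟩ hMJ).antisymm hMJ⟩, hIM⟩

lemma IsTMax.isPrime {M : Ideal R} (hM : IsTMax R M) : M.IsPrime := by
  refine ⟨hM.2.1, fun {x y} hxy => or_iff_not_imp_right.2 fun hy => ?_⟩
  have hcolon : M.colon {y} = M := by
    refine hM.2.2 _ (hM.1.colon y) (fun h => hy ?_) Ideal.le_colon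
    simpa using (h ▸ Submodule.mem_top : (1 : R) ∈ M.colon {y})
  exact hcolon ▸ Submodule.mem_colon_singleton.2 hxy

lemma mem_essSpec_iff {p : PrimeSpectrum R} :
    p ∈ EssSpec R ↔ ∀ a b : R, ∃ s ∉ p.asIdeal, a ∣ s * b ∨ b ∣ s * a := by
  constructor
  · intro hV a b
    have : ValuationRing (locg (K := 𝕂) p) := hV
    obtain ⟨c, hc⟩ := ValuationRing.cond (⟨φ a, algebraMap_mem_locg p a⟩ : locg (K := 𝕂) p)
      ⟨φ b, algebraMap_mem_locg p b⟩
    obtain ⟨u, t, ht, hut⟩ := c.2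
    refine ⟨t, ht, hc.imp (fun h => ⟨u, ?_⟩) (fun h => ⟨u, ?_⟩)⟩ <;>
    · replace h := congrArg Subtype.val h
      push_cast at h
      apply FaithfulSMul.algebraMap_injective R 𝕂
      rw [map_mul, map_mul, ← hut, ← h]
      ring
  · intro h
    have key : ∀ x : 𝕂, x ∈ locg (K := 𝕂) p ∨ x⁻¹ ∈ locg (K := 𝕂) p := by
      intro x
      obtain ⟨a, b, hb, rfl⟩ := IsFractionRing.div_surjective (A := R) x
      have hb0 : φ b ≠ 0 := IsFractionRing.to_map_ne_zero_of_mem_nonZeroDivisors hb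
      obtain ⟨s, hs, ⟨c, hc⟩ | ⟨c, hc⟩⟩ := h a b
      · right
        rcases eq_or_ne (φ a) 0 with ha | ha
        · simp [ha]
        refine ⟨c, s, hs, ?_⟩
        rw [inv_div, div_mul_eq_mul_div, div_eq_iff ha, ← map_mul, ← map_mul, mul_comm, hc,
          mul_comm a c]
      · left
        refine ⟨c, s, hs, ?_⟩
        rw [div_mul_eq_mul_div, div_eq_iff hb0, ← map_mul, ← map_mul, mul_comm, hc, mul_comm b c]
    exact (inferInstance : ValuationRing (ValuationSubring.ofSubring _ key))

lemma bot_mem_essSpec : (⊥ : PrimeSpectrum R) ∈ EssSpec R := by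
  refine mem_essSpec_iff.2 fun a b => ?_
  rcases eq_or_ne a 0 with rfl | ha
  · exact ⟨1, by simp, Or.inr (by simp)⟩
  · exact ⟨a, by simpa using ha, Or.inl (dvd_mul_right a b)⟩

lemma mem_essSpec_of_le {p q : PrimeSpectrum R} (hpq : p ≤ q) (hq : q ∈ EssSpec R) :
    p ∈ EssSpec R :=
  mem_essSpec_iff.2 fun a b =>
    let ⟨s, hs, hab⟩ := mem_essSpec_iff.1 hq a b
    ⟨s, fun h => hs (hpq h), hab⟩

/-- That is, `(T) D_p = a D_p`. -/
lemma exists_dvd_mul_of_mem_essSpec {p : PrimeSpectrum R} (hp : p ∈ EssSpec R) (T : Finset R) :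
    ∃ a ∈ Ideal.span (T : Set R), ∃ s ∉ p.asIdeal, ∀ b ∈ T, a ∣ s * b := by
  classical
  induction T using Finset.induction with
  | empty => exact ⟨0, zero_mem _, 1, (Ideal.ne_top_iff_one _).1 p.2.ne_top, by simp⟩
  | insert t T _ ih =>
    obtain ⟨a, ha, s, hs, hT⟩ := ih
    obtain ⟨s', hs', hat | hta⟩ := mem_essSpec_iff.1 hp a t
    · refine ⟨a, Ideal.span_mono (by simp) ha, s * s', p.2.mul_notMem hs hs', ?_⟩
      simp only [Finset.mem_insert, forall_eq_or_imp]
      refine ⟨mul_assoc s s' t ▸ hat.mul_left s, fun b hb => ?_⟩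
      exact mul_right_comm s b s' ▸ (hT b hb).mul_right s'
    · refine ⟨t, Ideal.subset_span (by simp), s * s', p.2.mul_notMem hs hs', ?_⟩
      simp only [Finset.mem_insert, forall_eq_or_imp]
      refine ⟨dvd_mul_left t _, fun b hb => ?_⟩
      exact (by ring : s' * (s * b) = s * s' * b) ▸ hta.trans (mul_dvd_mul_left s' (hT b hb))

lemma isTIdeal_of_mem_essSpec {p : PrimeSpectrum R} (hp : p ∈ EssSpec R) :
    IsTIdeal R p.asIdeal := by
  rintro x ⟨_, ⟨T, rfl⟩, hJp, hx⟩
  obtain ⟨a, ha, s, hs, hT⟩ := exists_dvd_mul_of_mem_essSpec hp T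
  have hJ : Ideal.span T ≤ (Ideal.span {a}).colon {s} := Ideal.span_le.2 fun b hb =>
    Submodule.mem_colon_singleton.2 <| Ideal.mem_span_singleton.2 <| by
      rw [smul_eq_mul, mul_comm]
      exact hT b hb
  have hxs : x * s ∈ Ideal.span {a} := Submodule.mem_colon_singleton.1 <|
    (isTIdeal_span_singleton a).colon s x ⟨_, ⟨T, rfl⟩, hJ, hx⟩
  exact (p.2.mem_or_mem (Ideal.span_le.2 (by simpa using hJp ha) hxs)).resolve_right hs

lemma iInf_locg_isTMax_eq_range :
    (⨅ p ∈ {p : PrimeSpectrum R | IsTMax R p.asIdeal}, locg (K := 𝕂) p) = RingHom.range φ := by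
  refine le_antisymm (fun x hx => ?_) ?_
  · obtain ⟨a, b, hb, rfl⟩ := IsFractionRing.div_surjective (A := R) x
    have hb0 : φ b ≠ 0 := IsFractionRing.to_map_ne_zero_of_mem_nonZeroDivisors hb
    -- the ideal of denominators of `a / b`
    set I := (Ideal.span {b}).colon {a}
    by_cases hI : I = ⊤
    · obtain ⟨c, hc⟩ := Ideal.mem_span_singleton'.1 <|
        Submodule.mem_colon_singleton.1 (hI ▸ Submodule.mem_top : (1 : R) ∈ I)
      refine ⟨c, ?_⟩
      rw [eq_div_iff hb0, ← map_mul, hc, one_smul]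
    obtain ⟨M, hM, hIM⟩ := exists_isTMax_le ((isTIdeal_span_singleton b).colon a) hI
    obtain ⟨u, t, ht, htu⟩ := Subring.mem_iInf.1 (Subring.mem_iInf.1 hx ⟨M, hM.isPrime⟩) hM
    refine absurd (hIM <| Submodule.mem_colon_singleton.2 <|
      Ideal.mem_span_singleton'.2 ⟨u, ?_⟩) ht
    apply FaithfulSMul.algebraMap_injective R 𝕂
    rw [smul_eq_mul, map_mul, map_mul, ← htu]
    field_simp
  · rintro _ ⟨r, rfl⟩
    exact Subring.mem_iInf.2 fun p => Subring.mem_iInf.2 fun _ => algebraMap_mem_locg p r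

lemma IsPvMD.isEssential (hP : IsPvMD R) : IsEssential R :=
  ⟨_, fun p hp => hP _ hp p.2, iInf_locg_isTMax_eq_range⟩

lemma IsPvMD.mem_essSpec_iff (hP : IsPvMD R) {p : PrimeSpectrum R} :
    p ∈ EssSpec R ↔ IsTIdeal R p.asIdeal := by
  refine ⟨isTIdeal_of_mem_essSpec, fun ht => ?_⟩
  obtain ⟨M, hM, hpM⟩ := exists_isTMax_le ht p.2.ne_top
  exact mem_essSpec_of_le (q := ⟨M, hM.isPrime⟩) hpM (hP M hM hM.isPrime)

lemma isOpen_setOf_not_isTIdeal :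
    IsOpen[constructibleTop R] {p : PrimeSpectrum R | ¬ IsTIdeal R p.asIdeal} := by
  let := constructibleTop R
  refine isOpen_iff_forall_mem_open.2 fun p hp => ?_
  rw [Set.mem_ofPred_eq, IsTIdeal] at hp
  push Not at hp
  obtain ⟨x, ⟨_, ⟨T, rfl⟩, hTp, hx⟩, hxp⟩ := hp
  refine ⟨{q | (T : Set R) ⊆ q.asIdeal} ∩ {q | x ∉ q.asIdeal},
    fun q hq hqt => hq.2 (hqt x ⟨_, ⟨T, rfl⟩, Ideal.span_le.2 hq.1, hx⟩),
    (isOpen_setOf_subset_constructibleTop T.finite_toSet).inter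
      (isOpen_setOf_notMem_constructibleTop x),
    Ideal.span_le.1 hTp, hxp⟩

lemma IsPvMD.isClosed_essSpec (hP : IsPvMD R) : IsClosed[constructibleTop R] (EssSpec R) := by
  let := constructibleTop R
  rw [← isOpen_compl_iff]
  convert isOpen_setOf_not_isTIdeal (R := R) using 1
  ext p
  simp [hP.mem_essSpec_iff]

lemma exists_mem_essSpec_le {Y : Set (PrimeSpectrum R)} (hY : IsEssentialRep R Y)
    {I : Ideal R} (hI : IsTIdeal R I) (hI1 : I ≠ ⊤) {J : Ideal R} (hJ : J.FG) (hJI : J ≤ I) :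
    ∃ p ∈ EssSpec R, J ≤ p.asIdeal := by
  rcases eq_or_ne J ⊥ with rfl | hJ0
  · exact ⟨⊥, bot_mem_essSpec, bot_le⟩
  by_contra! hYJ
  refine hI1 ((Ideal.eq_top_iff_one I).2 (hI 1 ⟨J, hJ, hJI, ?_⟩))
  refine (mem_one_div_one_div_coeIdeal_iff hJ0).2 fun y hy => ?_
  have hyD : ∀ p ∈ Y, y ∈ locg (K := 𝕂) p := fun p hp => by
    obtain ⟨j, hjJ, hjp⟩ := Set.not_subset.1 (hYJ p (hY.1 p hp))
    obtain ⟨c, hc⟩ :=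
      (FractionalIdeal.mem_one_iff _).1 ((mem_one_div_coeIdeal_iff hJ0).1 hy j hjJ)
    exact ⟨c, j, hjp, hc.symm⟩
  obtain ⟨c, rfl⟩ : y ∈ RingHom.range φ :=
    hY.2 ▸ Subring.mem_iInf.2 fun p => Subring.mem_iInf.2 (hyD p)
  simp

lemma mem_essSpec_of_isTMax (hE : IsEssential R) (hC : IsClosed[constructibleTop R] (EssSpec R))
    {M : Ideal R} (hM : IsTMax R M) : ⟨M, hM.isPrime⟩ ∈ EssSpec R := by
  let := constructibleTop R
  have := compactSpace_constructibleTop (A := R)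
  obtain ⟨Y, hY⟩ := hE
  have hfin : ∀ u : Finset M,
      (EssSpec R ∩ ⋂ x ∈ u, {p : PrimeSpectrum R | (x : R) ∈ p.asIdeal}).Nonempty := fun u => by
    obtain ⟨p, hp, hup⟩ := exists_mem_essSpec_le hY hM.1 hM.2.1
      (Submodule.fg_span (u.finite_toSet.image Subtype.val))
      (Ideal.span_le.2 (Set.image_subset_iff.2 fun x _ => x.2))
    exact ⟨p, hp, Set.mem_iInter₂.2 fun x hx => hup (Ideal.subset_span ⟨x, hx, rfl⟩)⟩
  obtain ⟨P, hP, hMP⟩ := hC.isCompact.inter_iInter_nonempty _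
    (fun x : M => isClosed_setOf_mem_constructibleTop (x : R)) hfin
  have hPM : P.asIdeal = M :=
    hM.2.2 _ (isTIdeal_of_mem_essSpec hP) P.2.ne_top fun x hx => Set.mem_iInter.1 hMP ⟨x, hx⟩
  exact (PrimeSpectrum.ext hPM : P = ⟨M, hM.isPrime⟩) ▸ hP

end Domain

theorem isPvMD_iff_essential_and_essSpec_isClosed {R : Type*} [CommRing R] [IsDomain R] :
    IsPvMD R ↔ IsEssential R ∧ @IsClosed _ (constructibleTop R) (EssSpec R) :=
  ⟨fun hP => ⟨hP.isEssential, hP.isClosed_essSpec⟩,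
    fun ⟨hE, hC⟩ _ hM _ => mem_essSpec_of_isTMax hE hC hM⟩
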